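/- For any positive semidefinite matrix A ∈ R^{n×n} and any k ≤ n, the rank-k ridge leverage scores satisfy τ_i^k(A) ≤ 2√(n/k)·τ_i^k(A^{1/2}) for every i. -/

import Mathlib

open Matrix

/-- Squared Frobenius norm of a matrix. -/
noncomputable def frobSq {n m : ℕ} (A : Matrix (Fin n) (Fin m) ℝ) : ℝ :=
  ∑ i, ∑ j, (A i j) ^ 2

/-- `P` is the Moore–Penrose pseudoinverse of `M` (the four Penrose conditions). -/
def IsMoorePenrose {n : ℕ} (M P : Matrix (Fin n) (Fin n) ℝ) : Prop :=
  M * P * M = M ∧ P * M * P = P ∧ (M * P)ᵀ = M * P ∧ (P * M)ᵀ = P * M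

/-!
Diagonalize `B = V diag(σ) Vᵀ`. Then `A = V diag(σ²) Vᵀ`, both ridge matrices and (by uniqueness)
their pseudoinverses are diagonal in the basis `V`, and
`τᵢ(A) = ∑ⱼ Vᵢⱼ² σⱼ⁴ / (σⱼ⁴ + λ_A)`, `τᵢ(B) = ∑ⱼ Vᵢⱼ² σⱼ² / (σⱼ² + λ_B)`.
Termwise, `t² / (t² + λ_A) ≤ 2 √r · t / (t + λ_B)` whenever `λ_B² ≤ r λ_A` and `r ≥ 1`
(AM–GM: `t √λ_A ≤ (t² + λ_A) / 2`), so it suffices that `‖B - B_k‖⁴ ≤ n ‖A - A_k‖²`.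
Let `S` index the `k` largest `σⱼ²`. Truncating `B` to `S` gives `‖B - B_k‖² ≤ ∑_{j ∉ S} σⱼ²`,
whose square is at most `n ∑_{j ∉ S} σⱼ⁴` by Cauchy–Schwarz. Conversely, if `Q` is the orthogonal
projection onto `ker A_k`, then `‖A - A_k‖² ≥ ‖A Q‖² = ∑ⱼ σⱼ⁴ (VᵀQV)ⱼⱼ`; the weights `(VᵀQV)ⱼⱼ`
lie in `[0, 1]` and sum to `tr Q ≥ n - k`, so this weighted sum dominates `∑_{j ∉ S} σⱼ⁴`.
-/

open Finset

variable {n : ℕ}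

theorem conj_mul_conj {V : Matrix (Fin n) (Fin n) ℝ} (hV : Vᵀ * V = 1)
    (X Y : Matrix (Fin n) (Fin n) ℝ) : V * X * Vᵀ * (V * Y * Vᵀ) = V * (X * Y) * Vᵀ := by
  simp only [mul_assoc, ← mul_assoc Vᵀ V, hV, one_mul]

theorem transpose_conj (V X : Matrix (Fin n) (Fin n) ℝ) : (V * X * Vᵀ)ᵀ = V * Xᵀ * Vᵀ := by
  simp only [transpose_mul, transpose_transpose, mul_assoc]

theorem trace_conj {V : Matrix (Fin n) (Fin n) ℝ} (hV : Vᵀ * V = 1)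
    (X : Matrix (Fin n) (Fin n) ℝ) : trace (V * X * Vᵀ) = trace X := by
  rw [trace_mul_comm, ← mul_assoc, hV, one_mul]

theorem conj_diagonal_apply_self (V : Matrix (Fin n) (Fin n) ℝ) (d : Fin n → ℝ) (i : Fin n) :
    (V * diagonal d * Vᵀ) i i = ∑ j, V i j ^ 2 * d j := by
  rw [mul_apply]
  simp only [mul_diagonal, transpose_apply]
  exact sum_congr rfl fun j _ => by ring

theorem frobSq_eq_trace {m : ℕ} (M : Matrix (Fin n) (Fin m) ℝ) : frobSq M = trace (M * Mᵀ) := by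
  simp [frobSq, trace, mul_apply, sq]

theorem frobSq_nonneg {m : ℕ} (M : Matrix (Fin n) (Fin m) ℝ) : 0 ≤ frobSq M := by
  unfold frobSq
  positivity

theorem frobSq_conj {V : Matrix (Fin n) (Fin n) ℝ} (hV : Vᵀ * V = 1)
    (M : Matrix (Fin n) (Fin n) ℝ) : frobSq (V * M * Vᵀ) = frobSq M := by
  rw [frobSq_eq_trace, transpose_conj, conj_mul_conj hV, trace_conj hV, frobSq_eq_trace]

theorem frobSq_diagonal (d : Fin n → ℝ) : frobSq (diagonal d) = ∑ j, d j ^ 2 := by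
  simp [frobSq_eq_trace, trace, sq]

namespace IsMoorePenrose

variable {M P Q : Matrix (Fin n) (Fin n) ℝ}

theorem unique (hP : IsMoorePenrose M P) (hQ : IsMoorePenrose M Q) : P = Q := by
  obtain ⟨hP1, hP2, hP3, hP4⟩ := hP
  obtain ⟨hQ1, hQ2, hQ3, hQ4⟩ := hQ
  have hMP : M * P = M * Q :=
    calc M * P = (M * Q * M * P)ᵀ := by rw [hQ1, hP3]
    _ = (M * P)ᵀ * (M * Q)ᵀ := by simp only [transpose_mul, mul_assoc]
    _ = M * Q := by rw [hP3, hQ3, ← mul_assoc, hP1]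
  have hPM : P * M = Q * M :=
    calc P * M = (P * (M * Q * M))ᵀ := by rw [hQ1, hP4]
    _ = (Q * M)ᵀ * (P * M)ᵀ := by simp only [transpose_mul, mul_assoc]
    _ = Q * M := by rw [hQ4, hP4, mul_assoc, ← mul_assoc M, hP1]
  calc P = P * M * P := hP2.symm
  _ = Q * M * Q := by rw [hPM, mul_assoc, hMP, ← mul_assoc]
  _ = Q := hQ2

-- Since `0⁻¹ = 0` in `ℝ`, `x⁻¹` is the Moore–Penrose pseudoinverse of the scalar `x`.
theorem diagonal (d : Fin n → ℝ) : IsMoorePenrose (diagonal d) (diagonal d⁻¹) := by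
  refine ⟨?_, ?_, ?_, ?_⟩ <;> simp only [diagonal_mul_diagonal, diagonal_transpose]
  · exact congrArg Matrix.diagonal (funext fun i => mul_inv_mul_cancel (d i))
  · exact congrArg Matrix.diagonal (funext fun i => by simpa using mul_inv_mul_cancel (d i)⁻¹)

theorem conj {V : Matrix (Fin n) (Fin n) ℝ} (hV : Vᵀ * V = 1) (h : IsMoorePenrose M P) :
    IsMoorePenrose (V * M * Vᵀ) (V * P * Vᵀ) := by
  obtain ⟨h1, h2, h3, h4⟩ := h
  refine ⟨?_, ?_, ?_, ?_⟩
  · rw [conj_mul_conj hV, conj_mul_conj hV, h1]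
  · rw [conj_mul_conj hV, conj_mul_conj hV, h2]
  · rw [conj_mul_conj hV, transpose_conj, h3]
  · rw [conj_mul_conj hV, transpose_conj, h4]

end IsMoorePenrose

theorem Matrix.IsHermitian.exists_eq_conj_diagonal {B : Matrix (Fin n) (Fin n) ℝ}
    (hB : B.IsHermitian) : ∃ (V : Matrix (Fin n) (Fin n) ℝ) (σ : Fin n → ℝ),
      Vᵀ * V = 1 ∧ B = V * diagonal σ * Vᵀ := by
  refine ⟨hB.eigenvectorUnitary, hB.eigenvalues, ?_, ?_⟩
  · simpa [star_eq_conjTranspose, conjTranspose_eq_transpose_of_trivial] using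
      (mem_unitaryGroup_iff').mp hB.eigenvectorUnitary.2
  · simpa [star_eq_conjTranspose, conjTranspose_eq_transpose_of_trivial] using
      hB.spectral_theorem

section Projection

variable {Q : Matrix (Fin n) (Fin n) ℝ}

theorem frobSq_mul_proj (hQ : Q.IsSymm) (hQQ : IsIdempotentElem Q)
    (M : Matrix (Fin n) (Fin n) ℝ) : frobSq (M * Q) = trace (M * Q * Mᵀ) := by
  rw [frobSq_eq_trace, transpose_mul, hQ.eq, mul_assoc, ← mul_assoc Q, hQQ.eq, mul_assoc]

theorem frobSq_eq_frobSq_mul_proj_add (hQ : Q.IsSymm) (hQQ : IsIdempotentElem Q)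
    (M : Matrix (Fin n) (Fin n) ℝ) : frobSq M = frobSq (M * Q) + frobSq (M * (1 - Q)) := by
  rw [frobSq_mul_proj hQ hQQ, frobSq_mul_proj (isSymm_one.sub hQ) hQQ.one_sub, ← trace_add,
    ← add_mul, ← mul_add, add_sub_cancel, mul_one, frobSq_eq_trace]

theorem frobSq_mul_proj_le_frobSq_sub (hQ : Q.IsSymm) (hQQ : IsIdempotentElem Q)
    {A D : Matrix (Fin n) (Fin n) ℝ} (hDQ : D * Q = 0) : frobSq (A * Q) ≤ frobSq (A - D) := by
  have hAQ : (A - D) * Q = A * Q := by rw [sub_mul, hDQ, sub_zero]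
  rw [frobSq_eq_frobSq_mul_proj_add hQ hQQ (A - D), hAQ]
  exact le_add_of_nonneg_right (frobSq_nonneg _)

theorem conj_proj_apply_self_nonneg (hQ : Q.IsSymm) (hQQ : IsIdempotentElem Q)
    (V : Matrix (Fin n) (Fin n) ℝ) (j : Fin n) : 0 ≤ (Vᵀ * Q * V) j j := by
  have h : Vᵀ * Q * V = (Q * V)ᵀ * (Q * V) := by
    rw [transpose_mul, hQ.eq, ← mul_assoc, mul_assoc Vᵀ Q Q, hQQ.eq]
  rw [h, mul_apply]
  exact sum_nonneg fun l _ => mul_self_nonneg _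

theorem conj_proj_apply_self_le_one {V : Matrix (Fin n) (Fin n) ℝ} (hV : Vᵀ * V = 1)
    (hQ : Q.IsSymm) (hQQ : IsIdempotentElem Q) (j : Fin n) : (Vᵀ * Q * V) j j ≤ 1 := by
  have h := conj_proj_apply_self_nonneg (isSymm_one.sub hQ) hQQ.one_sub V j
  rw [mul_sub, sub_mul, mul_one, hV, Matrix.sub_apply, one_apply_eq] at h
  linarith

theorem frobSq_conj_diagonal_mul_proj {V : Matrix (Fin n) (Fin n) ℝ} (hV : Vᵀ * V = 1)
    (hQ : Q.IsSymm) (hQQ : IsIdempotentElem Q) (a : Fin n → ℝ) :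
    frobSq (V * diagonal a * Vᵀ * Q) = ∑ j, a j ^ 2 * (Vᵀ * Q * V) j j := by
  rw [frobSq_mul_proj hQ hQQ, transpose_conj, diagonal_transpose]
  have h : V * diagonal a * Vᵀ * Q * (V * diagonal a * Vᵀ) =
      V * (diagonal a * (Vᵀ * Q * V) * diagonal a) * Vᵀ := by simp only [mul_assoc]
  rw [h, trace_conj hV]
  simp only [trace, Matrix.diag, mul_diagonal, diagonal_mul]
  exact sum_congr rfl fun j _ => by ring

end Projection

theorem exists_orthonormal_ker (D : Matrix (Fin n) (Fin n) ℝ) :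
    ∃ (m : ℕ) (w : Fin m → Fin n → ℝ), (∀ s t, w s ⬝ᵥ w t = if s = t then 1 else 0) ∧
      (∀ t, D *ᵥ w t = 0) ∧ m + D.rank = n := by
  let e := WithLp.linearEquiv 2 ℝ (Fin n → ℝ)
  let W := (LinearMap.ker D.mulVecLin).map e.symm.toLinearMap
  let b := stdOrthonormalBasis ℝ W
  refine ⟨Module.finrank ℝ W, fun t => WithLp.ofLp (b t : EuclideanSpace ℝ (Fin n)), ?_, ?_, ?_⟩
  · intro s t
    rw [← orthonormal_iff_ite.mp b.orthonormal s t, Submodule.coe_inner,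
      EuclideanSpace.inner_eq_star_dotProduct, star_trivial, dotProduct_comm]
  · intro t
    obtain ⟨x, hx, hxt⟩ := Submodule.mem_map.mp (b t).2
    change D *ᵥ WithLp.ofLp (b t : EuclideanSpace ℝ (Fin n)) = 0
    rw [← hxt]
    exact hx
  · rw [LinearEquiv.finrank_map_eq, add_comm, rank,
      LinearMap.finrank_range_add_finrank_ker, Module.finrank_fin_fun]

theorem exists_proj_mul_eq_zero (D : Matrix (Fin n) (Fin n) ℝ) :
    ∃ Q : Matrix (Fin n) (Fin n) ℝ, Q.IsSymm ∧ IsIdempotentElem Q ∧ D * Q = 0 ∧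
      trace Q + D.rank = n := by
  obtain ⟨m, w, hw, hDw, hm⟩ := exists_orthonormal_ker D
  refine ⟨∑ t, vecMulVec (w t) (w t), ?_, ?_, ?_, ?_⟩
  · simp [IsSymm, transpose_sum]
  · simp_rw [IsIdempotentElem, sum_mul_sum, vecMulVec_mul_vecMulVec, hw, ite_smul, one_smul,
      zero_smul, apply_ite (vecMulVec _), vecMulVec_zero, sum_ite_eq]
    simp
  · simp [mul_sum, mul_vecMulVec, hDw]
  · simp only [trace_sum, trace_vecMulVec, hw, ↓reduceIte, sum_const, card_univ,
      Fintype.card_fin, nsmul_eq_mul, mul_one]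
    exact_mod_cast hm

theorem exists_card_eq_forall_le {ι β : Type*} [Fintype ι] [DecidableEq ι] [LinearOrder β]
    (f : ι → β) {k : ℕ} (hk : k ≤ Fintype.card ι) :
    ∃ S : Finset ι, S.card = k ∧ ∀ i ∈ S, ∀ j ∉ S, f j ≤ f i := by
  induction k with
  | zero => exact ⟨∅, rfl, by simp⟩
  | succ m ih =>
    obtain ⟨S, hcard, hS⟩ := ih (Nat.le_of_succ_le hk)
    have hne : Sᶜ.Nonempty := by
      rw [← card_pos, card_compl, hcard]
      omega
    obtain ⟨j₀, hj₀, hmax⟩ := Sᶜ.exists_max_image f hne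
    refine ⟨insert j₀ S, by rw [card_insert_of_notMem (mem_compl.mp hj₀), hcard], ?_⟩
    intro i hi j hj
    rw [mem_insert, not_or] at hj
    rcases mem_insert.mp hi with rfl | hi
    · exact hmax j (mem_compl.mpr hj.2)
    · exact hS i hi j hj.2

theorem sum_compl_le_sum_mul_of_le_of_le {ι : Type*} [Fintype ι] [DecidableEq ι]
    {c p : ι → ℝ} {S : Finset ι} {θ : ℝ} (hθ : 0 ≤ θ) (hS : ∀ i ∈ S, θ ≤ c i)
    (hSc : ∀ j ∉ S, c j ≤ θ) (hp0 : ∀ j, 0 ≤ p j) (hp1 : ∀ j, p j ≤ 1)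
    (hp : (Sᶜ.card : ℝ) ≤ ∑ j, p j) : ∑ j ∈ Sᶜ, c j ≤ ∑ j, c j * p j := by
  have hin : θ * ∑ i ∈ S, p i ≤ ∑ i ∈ S, c i * p i := by
    rw [mul_sum]
    exact sum_le_sum fun i hi => mul_le_mul_of_nonneg_right (hS i hi) (hp0 i)
  have hout : ∑ j ∈ Sᶜ, c j * (1 - p j) ≤ θ * ∑ j ∈ Sᶜ, (1 - p j) := by
    rw [mul_sum]
    exact sum_le_sum fun j hj =>
      mul_le_mul_of_nonneg_right (hSc j (mem_compl.mp hj)) (sub_nonneg.mpr (hp1 j))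
  have hθp : θ * ∑ j ∈ Sᶜ, (1 - p j) ≤ θ * ∑ i ∈ S, p i := by
    refine mul_le_mul_of_nonneg_left ?_ hθ
    rw [← sum_add_sum_compl S p] at hp
    simp only [sum_sub_distrib, sum_const, nsmul_eq_mul, mul_one]
    linarith
  have hsplit : ∑ j ∈ Sᶜ, c j * (1 - p j) = ∑ j ∈ Sᶜ, c j - ∑ j ∈ Sᶜ, c j * p j := by
    simp only [mul_sub, mul_one, sum_sub_distrib]
  rw [← sum_add_sum_compl S (fun j => c j * p j)]
  linarith

theorem sum_compl_le_sum_mul {ι : Type*} [Fintype ι] [DecidableEq ι]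
    {c p : ι → ℝ} {S : Finset ι} (hc : ∀ j, 0 ≤ c j) (hS : ∀ i ∈ S, ∀ j ∉ S, c j ≤ c i)
    (hp0 : ∀ j, 0 ≤ p j) (hp1 : ∀ j, p j ≤ 1) (hp : (Sᶜ.card : ℝ) ≤ ∑ j, p j) :
    ∑ j ∈ Sᶜ, c j ≤ ∑ j, c j * p j := by
  rcases Sᶜ.eq_empty_or_nonempty with hSc | hSc
  · rw [hSc, sum_empty]
    exact sum_nonneg fun j _ => mul_nonneg (hc j) (hp0 j)
  obtain ⟨j₀, hj₀, hmax⟩ := Sᶜ.exists_max_image c hSc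
  exact sum_compl_le_sum_mul_of_le_of_le (hc j₀) (fun i hi => hS i hi j₀ (mem_compl.mp hj₀))
    (fun j hj => hmax j (mem_compl.mpr hj)) hp0 hp1 hp

theorem transpose_mul_mul_apply_self (M P : Matrix (Fin n) (Fin n) ℝ) (i : Fin n) :
    (Mᵀ * P * M) i i = (Mᵀ i) ⬝ᵥ (P *ᵥ (Mᵀ i)) := by
  simp only [mul_apply, dotProduct, mulVec, transpose_apply, sum_mul, mul_sum]
  rw [sum_comm]
  exact sum_congr rfl fun j _ => sum_congr rfl fun l _ => by ring

theorem sq_mul_inv_le_two_sqrt_mul {t μ ν r : ℝ} (ht : 0 ≤ t) (hμ : 0 ≤ μ) (hν : 0 ≤ ν)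
    (hr : 1 ≤ r) (hνμ : ν ^ 2 ≤ r * μ) :
    t ^ 2 * (t ^ 2 + μ)⁻¹ ≤ 2 * √r * (t * (t + ν)⁻¹) := by
  rcases ht.eq_or_lt with rfl | ht
  · simp
  have hr' : 1 ≤ √r := Real.one_le_sqrt.mpr hr
  have hν' : ν ≤ √r * √μ := by
    rw [← Real.sqrt_mul (by linarith)]
    exact Real.le_sqrt_of_sq_le hνμ
  have hamgm : 2 * (t * √μ) ≤ t ^ 2 + μ := by
    nlinarith [sq_nonneg (t - √μ), Real.sq_sqrt hμ]
  have key : t * (t + ν) ≤ 2 * √r * (t ^ 2 + μ) := by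
    nlinarith [mul_le_mul_of_nonneg_left hν' ht.le,
      mul_le_mul_of_nonneg_left hamgm (zero_le_one.trans hr')]
  rw [← div_eq_mul_inv, ← div_eq_mul_inv, ← mul_div_assoc,
    div_le_div_iff₀ (by positivity) (by positivity)]
  nlinarith [mul_le_mul_of_nonneg_left key ht.le]

section Spectral

variable {V : Matrix (Fin n) (Fin n) ℝ}

theorem sum_compl_sq_le_frobSq_sub (hV : Vᵀ * V = 1) {a : Fin n → ℝ} {S : Finset (Fin n)}
    (hS : ∀ i ∈ S, ∀ j ∉ S, a j ^ 2 ≤ a i ^ 2) {D : Matrix (Fin n) (Fin n) ℝ}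
    (hD : D.rank ≤ S.card) : ∑ j ∈ Sᶜ, a j ^ 2 ≤ frobSq (V * diagonal a * Vᵀ - D) := by
  obtain ⟨Q, hQ, hQQ, hDQ, htr⟩ := exists_proj_mul_eq_zero D
  have htrace : ∑ j, (Vᵀ * Q * V) j j = trace Q := by
    change trace (Vᵀ * Q * V) = trace Q
    rw [trace_mul_comm, ← mul_assoc, mul_eq_one_comm.mp hV, one_mul]
  have hcard : (Sᶜ.card : ℝ) ≤ ∑ j, (Vᵀ * Q * V) j j := by
    have hD' : (D.rank : ℝ) ≤ S.card := by exact_mod_cast hD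
    have hSn : S.card ≤ n := (card_le_univ S).trans_eq (Fintype.card_fin n)
    rw [htrace, card_compl, Fintype.card_fin, Nat.cast_sub hSn]
    linarith
  calc ∑ j ∈ Sᶜ, a j ^ 2 ≤ ∑ j, a j ^ 2 * (Vᵀ * Q * V) j j :=
        sum_compl_le_sum_mul (fun j => sq_nonneg _) hS (conj_proj_apply_self_nonneg hQ hQQ V)
          (conj_proj_apply_self_le_one hV hQ hQQ) hcard
    _ = frobSq (V * diagonal a * Vᵀ * Q) := (frobSq_conj_diagonal_mul_proj hV hQ hQQ a).symm
    _ ≤ frobSq (V * diagonal a * Vᵀ - D) := frobSq_mul_proj_le_frobSq_sub hQ hQQ hDQ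

theorem exists_rank_le_frobSq_sub_eq (hV : Vᵀ * V = 1) (σ : Fin n → ℝ) (S : Finset (Fin n)) :
    ∃ D : Matrix (Fin n) (Fin n) ℝ,
      D.rank ≤ S.card ∧ frobSq (V * diagonal σ * Vᵀ - D) = ∑ j ∈ Sᶜ, σ j ^ 2 := by
  refine ⟨V * diagonal (fun j => if j ∈ S then σ j else 0) * Vᵀ, ?_, ?_⟩
  · refine (rank_mul_le_left _ _).trans <| (rank_mul_le_right _ _).trans ?_
    rw [rank_diagonal, ← Fintype.card_coe S]
    exact Fintype.card_subtype_mono _ _ fun j hj => by by_contra h; simp [h] at hj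
  · rw [← sub_mul, ← mul_sub, diagonal_sub, frobSq_conj hV, frobSq_diagonal,
      ← sum_add_sum_compl S, sum_eq_zero fun j hj => by simp [hj], zero_add]
    exact sum_congr rfl fun j hj => by rw [if_neg (mem_compl.mp hj), sub_zero]

theorem frobSq_sub_sq_le (hV : Vᵀ * V = 1) (σ : Fin n → ℝ) {k : ℕ} (hkn : k ≤ n)
    {Ak Bk : Matrix (Fin n) (Fin n) ℝ} (hAk : Ak.rank ≤ k)
    (hBk : ∀ D : Matrix (Fin n) (Fin n) ℝ, D.rank ≤ k →
      frobSq (V * diagonal σ * Vᵀ - Bk) ≤ frobSq (V * diagonal σ * Vᵀ - D)) :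
    frobSq (V * diagonal σ * Vᵀ - Bk) ^ 2 ≤
      n * frobSq (V * diagonal (fun j => σ j ^ 2) * Vᵀ - Ak) := by
  obtain ⟨S, rfl, hS⟩ := exists_card_eq_forall_le (fun j => (σ j ^ 2) ^ 2) (k := k)
    (by rwa [Fintype.card_fin])
  obtain ⟨D, hD, hBD⟩ := exists_rank_le_frobSq_sub_eq hV σ S
  have hcard : (Sᶜ.card : ℝ) ≤ n := by
    exact_mod_cast (card_le_univ Sᶜ).trans_eq (Fintype.card_fin n)
  calc frobSq (V * diagonal σ * Vᵀ - Bk) ^ 2 ≤ (∑ j ∈ Sᶜ, σ j ^ 2) ^ 2 :=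
        pow_le_pow_left₀ (frobSq_nonneg _) (hBD ▸ hBk D hD) 2
    _ ≤ Sᶜ.card * ∑ j ∈ Sᶜ, (σ j ^ 2) ^ 2 := sq_sum_le_card_mul_sum_sq
    _ ≤ n * frobSq (V * diagonal (fun j => σ j ^ 2) * Vᵀ - Ak) :=
        mul_le_mul hcard (sum_compl_sq_le_frobSq_sub hV hS hAk)
          (sum_nonneg fun j _ => by positivity) (Nat.cast_nonneg n)

theorem leverage_score_conj_diagonal (hV : Vᵀ * V = 1) (a : Fin n → ℝ) {μ : ℝ}
    {P : Matrix (Fin n) (Fin n) ℝ}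
    (hP : IsMoorePenrose
      (V * diagonal a * Vᵀ * (V * diagonal a * Vᵀ)ᵀ + μ • (1 : Matrix (Fin n) (Fin n) ℝ)) P)
    (i : Fin n) :
    ((V * diagonal a * Vᵀ)ᵀ i) ⬝ᵥ (P *ᵥ ((V * diagonal a * Vᵀ)ᵀ i)) =
      ∑ j, V i j ^ 2 * (a j ^ 2 * (a j ^ 2 + μ)⁻¹) := by
  have hM : V * diagonal a * Vᵀ * (V * diagonal a * Vᵀ)ᵀ + μ • (1 : Matrix (Fin n) (Fin n) ℝ) =
      V * diagonal (fun j => a j ^ 2 + μ) * Vᵀ := by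
    have hone : (1 : Matrix (Fin n) (Fin n) ℝ) = V * 1 * Vᵀ := by
      rw [mul_one, mul_eq_one_comm.mp hV]
    rw [transpose_conj, diagonal_transpose, conj_mul_conj hV, hone, ← Matrix.smul_mul,
      ← Matrix.mul_smul, ← add_mul, ← mul_add, diagonal_mul_diagonal, smul_one_eq_diagonal,
      diagonal_add]
    simp only [sq]
  rw [hM] at hP
  obtain rfl := hP.unique ((IsMoorePenrose.diagonal _).conj hV)
  rw [← transpose_mul_mul_apply_self, transpose_conj, diagonal_transpose, conj_mul_conj hV,
    conj_mul_conj hV, diagonal_mul_diagonal, diagonal_mul_diagonal, conj_diagonal_apply_self]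
  exact sum_congr rfl fun j _ => by simp only [Pi.inv_apply]; ring

end Spectral

theorem ridge_leverage_score_bound_general {n k : ℕ} (hk : 1 ≤ k) (hkn : k ≤ n)
    (A B : Matrix (Fin n) (Fin n) ℝ)
    (hB : B.PosSemidef) (hBB : B * B = A)
    (Ak Bk : Matrix (Fin n) (Fin n) ℝ)
    (hAkrank : Ak.rank ≤ k)
    (hBkbest : ∀ D : Matrix (Fin n) (Fin n) ℝ, D.rank ≤ k →
      frobSq (B - Bk) ≤ frobSq (B - D))
    (P1 P2 : Matrix (Fin n) (Fin n) ℝ)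
    (hP1 : IsMoorePenrose
      (A * Aᵀ + (frobSq (A - Ak) / (k : ℝ)) • (1 : Matrix (Fin n) (Fin n) ℝ)) P1)
    (hP2 : IsMoorePenrose
      (B * Bᵀ + (frobSq (B - Bk) / (k : ℝ)) • (1 : Matrix (Fin n) (Fin n) ℝ)) P2)
    (i : Fin n) :
    (Aᵀ i) ⬝ᵥ (P1 *ᵥ (Aᵀ i))
      ≤ 2 * Real.sqrt ((n : ℝ) / (k : ℝ)) * ((Bᵀ i) ⬝ᵥ (P2 *ᵥ (Bᵀ i))) := by
  obtain ⟨V, σ, hV, rfl⟩ := hB.1.exists_eq_conj_diagonal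
  obtain rfl : A = V * diagonal (fun j => σ j ^ 2) * Vᵀ := by
    rw [← hBB, conj_mul_conj hV, diagonal_mul_diagonal]
    simp only [sq]
  have hk0 : (0 : ℝ) < k := by exact_mod_cast hk
  have hr : 1 ≤ (n : ℝ) / k := by
    rw [one_le_div hk0]
    exact_mod_cast hkn
  have hμ : (frobSq (V * diagonal σ * Vᵀ - Bk) / k) ^ 2 ≤
      n / k * (frobSq (V * diagonal (fun j => σ j ^ 2) * Vᵀ - Ak) / k) := by
    rw [div_pow, div_mul_div_comm, sq (k : ℝ)]
    gcongr
    exact frobSq_sub_sq_le hV σ hkn hAkrank hBkbest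
  rw [leverage_score_conj_diagonal hV _ hP1, leverage_score_conj_diagonal hV _ hP2, mul_sum]
  refine sum_le_sum fun j _ => ?_
  refine (mul_le_mul_of_nonneg_left ?_ (sq_nonneg (V i j))).trans_eq (mul_left_comm _ _ _)
  exact sq_mul_inv_le_two_sqrt_mul (sq_nonneg _) (div_nonneg (frobSq_nonneg _) hk0.le)
    (div_nonneg (frobSq_nonneg _) hk0.le) hr hμ

/-- For PSD `A` with PSD square root `B`, the rank-`k` ridge leverage scores satisfy
`τ_i^k(A) ≤ 2√(n/k)·τ_i^k(A^{1/2})`. -/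
theorem ridge_leverage_score_bound {n k : ℕ} (hk : 1 ≤ k) (hkn : k ≤ n)
    (A B : Matrix (Fin n) (Fin n) ℝ)
    (hA : A.PosSemidef) (hB : B.PosSemidef) (hBB : B * B = A)
    (Ak Bk : Matrix (Fin n) (Fin n) ℝ)
    (hAkrank : Ak.rank ≤ k)
    (hAkbest : ∀ D : Matrix (Fin n) (Fin n) ℝ, D.rank ≤ k →
      frobSq (A - Ak) ≤ frobSq (A - D))
    (hBkrank : Bk.rank ≤ k)
    (hBkbest : ∀ D : Matrix (Fin n) (Fin n) ℝ, D.rank ≤ k →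
      frobSq (B - Bk) ≤ frobSq (B - D))
    (P1 P2 : Matrix (Fin n) (Fin n) ℝ)
    (hP1 : IsMoorePenrose
      (A * Aᵀ + (frobSq (A - Ak) / (k : ℝ)) • (1 : Matrix (Fin n) (Fin n) ℝ)) P1)
    (hP2 : IsMoorePenrose
      (B * Bᵀ + (frobSq (B - Bk) / (k : ℝ)) • (1 : Matrix (Fin n) (Fin n) ℝ)) P2)
    (i : Fin n) :
    (Aᵀ i) ⬝ᵥ (P1 *ᵥ (Aᵀ i))
      ≤ 2 * Real.sqrt ((n : ℝ) / (k : ℝ)) * ((Bᵀ i) ⬝ᵥ (P2 *ᵥ (Bᵀ i))) :=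
  ridge_leverage_score_bound_general hk hkn A B hB hBB Ak Bk hAkrank hBkbest P1 P2 hP1 hP2 i
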